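/- arXiv:1209.5932 — 2 statements merged into one kernel-verified Lean document; each statement's English description precedes it below -/
import Mathlib

section
/- Let n be odd. Then for all i with 1 ≤ i ≤ (n-1)/2, one has K_{2i}((n-1)/2, n) = K_{2i+1}((n-1)/2, n). -/
/-!
`K i k n` is the coefficient of `X ^ i` in `(1 - X) ^ k (1 + X) ^ (n - k)`. For `n = 2k + 1` this
generating function is `(1 - X²) ^ k (1 + X)`, an even polynomial times `1 + X`, so its
coefficients at `X ^ (2i)` and `X ^ (2i + 1)` both equal the coefficient of `X ^ i` in `(1 - X) ^ k`.
-/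

open Finset

def K (i k n : ℕ) : ℤ :=
  ∑ j ∈ Finset.range (i + 1), (-1) ^ j * (Nat.choose k j) * (Nat.choose (n - k) (i - j))

open Polynomial

theorem coeff_one_sub_X_pow (R : Type*) [CommRing R] (k j : ℕ) :
    ((1 - X : R[X]) ^ k).coeff j = (-1) ^ j * k.choose j := by
  have : (1 - X : R[X]) ^ k = ∑ m ∈ range (k + 1), C ((-1) ^ m * (k.choose m : R)) * X ^ m := by
    rw [sub_eq_neg_add, add_pow]
    refine sum_congr rfl fun m _ => ?_
    simp only [neg_pow (X : R[X]), one_pow, mul_one, C_mul, C_pow, C_neg, C_1, map_natCast]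
    ring
  rw [this, finsetSum_coeff]
  simp only [coeff_C_mul_X_pow, sum_ite_eq, mem_range]
  split_ifs with h
  · rfl
  · rw [Nat.choose_eq_zero_of_lt (by omega), Nat.cast_zero, mul_zero]

section

variable {R : Type*} [CommSemiring R]

theorem coeff_expand_two_odd (Q : R[X]) (i : ℕ) : (expand R 2 Q).coeff (2 * i + 1) = 0 := by
  rw [coeff_expand two_pos, if_neg (by omega)]

theorem coeff_expand_two_mul_one_add_X (Q : R[X]) (m : ℕ) :
    (expand R 2 Q * (1 + X)).coeff m = Q.coeff (m / 2) := by
  rw [mul_one_add, coeff_add]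
  obtain ⟨i, rfl | rfl⟩ := Nat.even_or_odd' m
  · have hX : (expand R 2 Q * X).coeff (2 * i) = 0 := by
      rcases i with _ | i
      · exact coeff_mul_X_zero _
      · rw [show 2 * (i + 1) = 2 * i + 1 + 1 by ring, coeff_mul_X, coeff_expand_two_odd]
    rw [hX, coeff_expand_mul' two_pos, Nat.mul_div_cancel_left _ two_pos, add_zero]
  · rw [coeff_expand_two_odd, coeff_mul_X, coeff_expand_mul' two_pos, zero_add]
    congr 1
    omega

end

theorem K_eq_coeff (i k n : ℕ) : K i k n = ((1 - X : ℤ[X]) ^ k * (1 + X) ^ (n - k)).coeff i := by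
  rw [K, coeff_mul, Nat.sum_antidiagonal_eq_sum_range_succ_mk]
  refine sum_congr rfl fun j _ => ?_
  rw [coeff_one_sub_X_pow, coeff_one_add_X_pow]

theorem one_sub_X_pow_mul_one_add_X_pow_succ (R : Type*) [CommRing R] (k : ℕ) :
    (1 - X : R[X]) ^ k * (1 + X) ^ (k + 1) = expand R 2 ((1 - X) ^ k) * (1 + X) := by
  rw [map_pow, map_sub, map_one, expand_X, pow_succ, ← mul_assoc, ← mul_pow]
  ring

theorem stmt9_general (n i : ℕ) (hn : Odd n) :
    K (2 * i) ((n - 1) / 2) n = K (2 * i + 1) ((n - 1) / 2) n := by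
  obtain ⟨k, rfl⟩ := hn
  have hK (m : ℕ) : K m k (2 * k + 1) = ((1 - X : ℤ[X]) ^ k).coeff (m / 2) := by
    rw [K_eq_coeff, show 2 * k + 1 - k = k + 1 by omega, one_sub_X_pow_mul_one_add_X_pow_succ,
      coeff_expand_two_mul_one_add_X]
  rw [show (2 * k + 1 - 1) / 2 = k by omega, hK, hK]
  congr 1
  omega

theorem stmt9 (n i : ℕ) (hn : Odd n) (hi1 : 1 ≤ i) (hi2 : i ≤ (n - 1) / 2) :
    K (2 * i) ((n - 1) / 2) n = K (2 * i + 1) ((n - 1) / 2) n :=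
  stmt9_general n i hn
end

section
/- For every positive integer n, Σ_{i=0}^{n} |K_i(⌊n/2⌋, n)| = Σ_{i=0}^{n} |K_i(⌈n/2⌉, n)| = 2^{⌈n/2⌉}. -/
/-!
`K i k n` is the coefficient of `X ^ i` in `(1 - X) ^ k * (1 + X) ^ (n - k)`. For `n = 2m` and
`k = m` this polynomial is `(1 - X²) ^ m`; for `n = 2m + 1` and `k ∈ {m, m + 1}` it is
`(1 - X²) ^ m * (1 ± X)`. Its coefficients are therefore `±C(m, r)`, each occurring once,
resp. twice, so their absolute values add up to `2 ^ m`, resp. `2 ^ (m + 1)`.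
-/

open Finset

open Polynomial

theorem Finset.sum_range_two_mul {M : Type*} [AddCommMonoid M] (f : ℕ → M) (m : ℕ) :
    ∑ i ∈ range (2 * m), f i = ∑ r ∈ range m, (f (2 * r) + f (2 * r + 1)) := by
  induction m with
  | zero => simp
  | succ m ih => rw [Nat.mul_succ, sum_range_succ, sum_range_succ, sum_range_succ, ih, add_assoc]

namespace Polynomial

variable {R : Type*} [CommRing R]

theorem coeff_one_sub_X_pow (k j : ℕ) :
    ((1 - X : R[X]) ^ k).coeff j = (-1) ^ j * k.choose j := by
  have h : (1 - X : R[X]) ^ k = C ((-1) ^ k) * (X + C (-1)) ^ k := by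
    rw [C_pow, ← mul_pow, C_neg, C_1]
    ring
  rw [h, coeff_C_mul, coeff_X_add_C_pow]
  rcases le_or_gt j k with hjk | hkj
  · obtain ⟨d, rfl⟩ := Nat.exists_eq_add_of_le hjk
    rw [Nat.add_sub_cancel_left, ← mul_assoc, ← pow_add, add_assoc, pow_add, ← two_mul,
      pow_mul, neg_one_sq, one_pow, mul_one]
  · simp [Nat.choose_eq_zero_of_lt hkj]

theorem one_sub_X_pow_mul_one_add_X_pow (m : ℕ) :
    (1 - X : R[X]) ^ m * (1 + X) ^ m = expand R 2 ((1 - X) ^ m) := by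
  rw [← mul_pow, map_pow, map_sub, map_one, expand_X]
  ring

theorem coeff_expand_two_mul_one_add_C_mul_X_two_mul (q : R[X]) (e : R) (r : ℕ) :
    (expand R 2 q * (1 + C e * X)).coeff (2 * r) = q.coeff r := by
  rw [mul_add, mul_one, coeff_add, coeff_expand_mul' two_pos, mul_left_comm, coeff_C_mul]
  rcases r with _ | r
  · simp
  · rw [Nat.mul_succ, coeff_mul_X, coeff_expand two_pos, if_neg (by omega), mul_zero, add_zero]

theorem coeff_expand_two_mul_one_add_C_mul_X_two_mul_add_one (q : R[X]) (e : R) (r : ℕ) :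
    (expand R 2 q * (1 + C e * X)).coeff (2 * r + 1) = e * q.coeff r := by
  rw [mul_add, mul_one, coeff_add, coeff_expand two_pos, if_neg (by omega), zero_add,
    mul_left_comm, coeff_C_mul, coeff_mul_X, coeff_expand_mul' two_pos]

end Polynomial

theorem sum_abs_coeff_expand_two_mul_one_add_C_mul_X (q : ℤ[X]) (e : ℤ) (m : ℕ) :
    ∑ i ∈ range (2 * m + 2), |(expand ℤ 2 q * (1 + C e * X)).coeff i| =
      (1 + |e|) * ∑ r ∈ range (m + 1), |q.coeff r| := by
  rw [← mul_add_one, sum_range_two_mul, mul_sum]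
  refine sum_congr rfl fun r _ => ?_
  rw [coeff_expand_two_mul_one_add_C_mul_X_two_mul,
    coeff_expand_two_mul_one_add_C_mul_X_two_mul_add_one, abs_mul]
  ring

theorem sum_abs_coeff_one_sub_X_pow (m : ℕ) :
    ∑ r ∈ range (m + 1), |((1 - X : ℤ[X]) ^ m).coeff r| = 2 ^ m := by
  simp only [coeff_one_sub_X_pow, abs_mul, abs_pow, abs_neg, abs_one, one_pow, one_mul,
    Nat.abs_cast]
  exact_mod_cast Nat.sum_range_choose m

theorem K_eq_zero_of_lt {i k n : ℕ} (hk : k ≤ n) (hn : n < i) : K i k n = 0 := by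
  refine sum_eq_zero fun j _ => ?_
  rcases le_or_gt j k with hjk | hkj
  · rw [Nat.choose_eq_zero_of_lt (by omega : n - k < i - j), Nat.cast_zero, mul_zero]
  · rw [Nat.choose_eq_zero_of_lt hkj, Nat.cast_zero, mul_zero, zero_mul]

theorem sum_abs_K_of_eq_expand {k n m : ℕ} (e : ℤ)
    (h : (1 - X : ℤ[X]) ^ k * (1 + X) ^ (n - k) = expand ℤ 2 ((1 - X) ^ m) * (1 + C e * X)) :
    ∑ i ∈ range (2 * m + 2), |K i k n| = (1 + |e|) * 2 ^ m := by
  simp only [K_eq_coeff, h]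
  rw [sum_abs_coeff_expand_two_mul_one_add_C_mul_X, sum_abs_coeff_one_sub_X_pow]

theorem stmt12_general (n : ℕ) :
    ∑ i ∈ Finset.range (n + 1), |K i (n / 2) n| = 2 ^ ((n + 1) / 2) ∧
    ∑ i ∈ Finset.range (n + 1), |K i ((n + 1) / 2) n| = 2 ^ ((n + 1) / 2) := by
  obtain ⟨m, rfl | rfl⟩ := Nat.even_or_odd' n
  · have hsum : ∑ i ∈ range (2 * m + 1), |K i m (2 * m)| = 2 ^ m := by
      have h := sum_abs_K_of_eq_expand (k := m) (n := 2 * m) 0 <| by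
        rw [two_mul, Nat.add_sub_cancel, one_sub_X_pow_mul_one_add_X_pow, C_0, zero_mul,
          add_zero, mul_one]
      rwa [sum_range_succ, K_eq_zero_of_lt (by omega) (by omega), abs_zero, add_zero, add_zero,
        one_mul] at h
    rw [show 2 * m / 2 = m by omega, show (2 * m + 1) / 2 = m by omega]
    exact ⟨hsum, hsum⟩
  · have h1 := sum_abs_K_of_eq_expand (k := m) (n := 2 * m + 1) (m := m) 1 <| by
      rw [show 2 * m + 1 - m = m + 1 by omega, pow_succ, ← mul_assoc,
        one_sub_X_pow_mul_one_add_X_pow, C_1, one_mul]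
    have h2 := sum_abs_K_of_eq_expand (k := m + 1) (n := 2 * m + 1) (m := m) (-1) <| by
      rw [show 2 * m + 1 - (m + 1) = m by omega, pow_succ, mul_right_comm,
        one_sub_X_pow_mul_one_add_X_pow, C_neg, C_1, neg_one_mul, ← sub_eq_add_neg]
    have htwo : ∀ e : ℤ, |e| = 1 → (1 + |e|) * 2 ^ m = 2 ^ (m + 1) := fun e he => by
      rw [he, pow_succ]
      ring
    rw [show (2 * m + 1) / 2 = m by omega, show (2 * m + 1 + 1) / 2 = m + 1 by omega]
    exact ⟨h1.trans (htwo 1 abs_one), h2.trans (htwo (-1) (by simp))⟩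

theorem stmt12 (n : ℕ) (hpos : 0 < n) :
    ∑ i ∈ Finset.range (n + 1), |K i (n / 2) n| = 2 ^ ((n + 1) / 2) ∧
    ∑ i ∈ Finset.range (n + 1), |K i ((n + 1) / 2) n| = 2 ^ ((n + 1) / 2) :=
  stmt12_general n
end
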